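/- Let q and a be complex numbers with |q| < 1 and a ≠ 0. Define α_0 = 1 and α_n = a^{-n} q^{n(n-1)/2} + a^n q^{n(n+1)/2} for n ≥ 1, and β_n = (-aq; q)_n (-1/a; q)_n / (q; q)_{2n} for n ≥ 0. Then (α_n, β_n) form a Bailey pair relative to 1; that is, for every n ≥ 0, β_n = ∑_{r=0}^n α_r / ((q; q)_{n-r} (q; q)_{n+r}). -/

import Mathlib

/-!
Pulling `a q^(k+1)` out of each factor of `(-aq; q)_n` and reversing the order turns
`(-aq; q)_n (-1/a; q)_n` into `a^n q^(n(n+1)/2) ∏_{k<2n} (1 + x q^k)` with `x = 1/(a q^n)`.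
Rothe's q-binomial theorem expands this product as `∑_j [2n, j]_q q^(j(j-1)/2) x^j`, and
pairing `j = n + r` with `j = n - r` (the Gaussian binomial is symmetric) collapses the powers
of `a` and `q` to exactly `α_r`. Finally `[2n, n+r]_q = (q;q)_{2n} / ((q;q)_{n-r} (q;q)_{n+r})`.
The factorization divides by `q`, so `q = 0` is checked by hand.
-/

/-- Finite q-Pochhammer symbol `(a; q)_n = ∏_{k=0}^{n-1} (1 - a q^k)`. -/
noncomputable def qPoch (a q : ℂ) (n : ℕ) : ℂ := ∏ k ∈ Finset.range n, (1 - a * q ^ k)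

open Finset

lemma choose_two_succ_add_choose_two_add (n r : ℕ) :
    (n + 1).choose 2 + (n + r).choose 2 = r.choose 2 + n * (n + r) := by
  apply Nat.cast_injective (R := ℚ)
  push_cast [Nat.cast_choose_two]
  ring

lemma choose_two_add_succ_add_choose_two (m r : ℕ) :
    (m + r + 1).choose 2 + m.choose 2 = (r + 1).choose 2 + (m + r) * m := by
  apply Nat.cast_injective (R := ℚ)
  push_cast [Nat.cast_choose_two]
  ring

lemma sum_range_add_one_eq_choose_two (n : ℕ) : ∑ k ∈ range n, (k + 1) = (n + 1).choose 2 := by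
  rw [Nat.choose_two_right, ← sum_range_id, sum_range_succ', add_zero]

lemma sum_range_two_mul_add_one_eq_sum_pairs {M : Type*} [AddCommMonoid M] (f : ℕ → M) (n : ℕ) :
    ∑ j ∈ range (2 * n + 1), f j =
      ∑ r ∈ range (n + 1), if r = 0 then f n else f (n + r) + f (n - r) := by
  have hlow : ∑ j ∈ range n, f j = ∑ r ∈ range n, f (n - (r + 1)) := by
    rw [← sum_range_reflect]
    exact sum_congr rfl fun r _ => by rw [Nat.sub_sub, add_comm 1 r]
  rw [two_mul, add_assoc, sum_range_add, sum_range_succ', sum_range_succ', hlow]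
  simp only [if_pos, add_zero, Nat.succ_ne_zero, if_false, sum_add_distrib, Nat.sub_zero]
  abel

variable {a q : ℂ}

lemma qPoch_zero (a q : ℂ) : qPoch a q 0 = 1 := prod_range_zero _

lemma qPoch_succ (a q : ℂ) (n : ℕ) : qPoch a q (n + 1) = qPoch a q n * (1 - a * q ^ n) :=
  prod_range_succ _ _

lemma qPoch_zero_left (q : ℂ) (n : ℕ) : qPoch 0 q n = 1 := by simp [qPoch]

lemma qPoch_ne_zero (ha : ‖a‖ < 1) (hq : ‖q‖ ≤ 1) (n : ℕ) : qPoch a q n ≠ 0 := by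
  refine prod_ne_zero_iff.2 fun k _ => sub_ne_zero.2 fun h => ?_
  have : ‖a * q ^ k‖ < 1 := by
    rw [norm_mul, norm_pow]
    exact lt_of_le_of_lt (mul_le_of_le_one_right (norm_nonneg a) (pow_le_one₀ (norm_nonneg q) hq)) ha
  rw [← h, norm_one] at this
  exact lt_irrefl 1 this

/-- The Gaussian binomial coefficient `[N, j]_q`; for `j > N` the truncated `N - j` makes it junk,
not `0`. -/
noncomputable def qBinomial (q : ℂ) (N j : ℕ) : ℂ :=
  qPoch q q N / (qPoch q q j * qPoch q q (N - j))

lemma qBinomial_symm (q : ℂ) {N j : ℕ} (h : j ≤ N) : qBinomial q N (N - j) = qBinomial q N j := by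
  rw [qBinomial, qBinomial, Nat.sub_sub_self h, mul_comm]

lemma qBinomial_zero_right (hq : ∀ m, qPoch q q m ≠ 0) (N : ℕ) : qBinomial q N 0 = 1 := by
  rw [qBinomial, qPoch_zero, one_mul, Nat.sub_zero, div_self (hq N)]

lemma qBinomial_self (hq : ∀ m, qPoch q q m ≠ 0) (N : ℕ) : qBinomial q N N = 1 := by
  rw [qBinomial, Nat.sub_self, qPoch_zero, mul_one, div_self (hq N)]

lemma qBinomial_succ_succ (hq : ∀ m, qPoch q q m ≠ 0) {N j : ℕ} (h : j < N) :
    qBinomial q (N + 1) (j + 1) = qBinomial q N (j + 1) + q ^ (N - j) * qBinomial q N j := by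
  obtain ⟨d, rfl⟩ : ∃ d, N = j + d + 1 := ⟨N - j - 1, by omega⟩
  have hfac : ∀ m, (1 : ℂ) - q ^ (m + 1) ≠ 0 := fun m h0 => hq (m + 1) <| by
    rw [qPoch_succ, ← pow_succ', h0, mul_zero]
  rw [qBinomial, qBinomial, qBinomial, show j + d + 1 + 1 - (j + 1) = d + 1 by omega,
    show j + d + 1 - (j + 1) = d by omega, show j + d + 1 - j = d + 1 by omega]
  simp only [qPoch_succ, ← pow_succ']
  field_simp [hq (j + d + 1), hq j, hq d, hfac j, hfac d]
  ring

theorem prod_one_add_mul_pow_eq_sum_qBinomial (hq : ∀ m, qPoch q q m ≠ 0) (x : ℂ) (N : ℕ) :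
    ∏ k ∈ range N, (1 + x * q ^ k) =
      ∑ j ∈ range (N + 1), qBinomial q N j * q ^ j.choose 2 * x ^ j := by
  induction N with
  | zero => simp [qBinomial_self hq]
  | succ N ih =>
    have hstep : ∀ j ∈ range N, qBinomial q (N + 1) (j + 1) * q ^ (j + 1).choose 2 * x ^ (j + 1) =
        qBinomial q N (j + 1) * q ^ (j + 1).choose 2 * x ^ (j + 1) +
          qBinomial q N j * q ^ j.choose 2 * x ^ j * (x * q ^ N) := by
      intro j hj
      have hjN := mem_range.1 hj
      have hsplit : q ^ N = q ^ (N - j) * q ^ j := by rw [← pow_add, Nat.sub_add_cancel hjN.le]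
      rw [qBinomial_succ_succ hq hjN, Nat.choose_succ_succ', Nat.choose_one_right, hsplit]
      ring
    rw [prod_range_succ, ih, eq_comm, sum_range_succ', sum_range_succ, sum_congr rfl hstep,
      sum_add_distrib, mul_add, mul_one, sum_mul, sum_range_succ', sum_range_succ _ N,
      qBinomial_zero_right hq, qBinomial_zero_right hq, qBinomial_self hq, qBinomial_self hq,
      Nat.choose_succ_succ', Nat.choose_one_right]
    ring

lemma qPoch_neg_mul_self (hq0 : q ≠ 0) (ha : a ≠ 0) (n : ℕ) :
    qPoch (-(a * q)) q n =
      a ^ n * q ^ (n + 1).choose 2 * ∏ k ∈ range n, (1 + (a * q ^ n)⁻¹ * q ^ k) := by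
  have hfactor : ∀ k ∈ range n,
      1 - -(a * q) * q ^ k = a * q ^ (k + 1) * (1 + (a * q ^ n)⁻¹ * q ^ (n - 1 - k)) := by
    intro k hk
    have hpow : q ^ (k + 1) * q ^ (n - 1 - k) = q ^ n := by
      rw [← pow_add]; congr 1; have := mem_range.1 hk; omega
    field_simp
    linear_combination -hpow
  rw [qPoch, prod_congr rfl hfactor, prod_mul_distrib, prod_mul_distrib, prod_const, card_range,
    prod_pow_eq_pow_sum, sum_range_add_one_eq_choose_two,
    prod_range_reflect (fun k => 1 + (a * q ^ n)⁻¹ * q ^ k) n]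

lemma qPoch_neg_one_div (hq0 : q ≠ 0) (ha : a ≠ 0) (n : ℕ) :
    qPoch (-1 / a) q n = ∏ k ∈ range n, (1 + (a * q ^ n)⁻¹ * q ^ (n + k)) := by
  refine prod_congr rfl fun k _ => ?_
  rw [pow_add]
  field_simp
  ring

lemma qPoch_neg_mul_self_mul_qPoch_neg_one_div (hq0 : q ≠ 0) (ha : a ≠ 0) (n : ℕ) :
    qPoch (-(a * q)) q n * qPoch (-1 / a) q n =
      a ^ n * q ^ (n + 1).choose 2 * ∏ k ∈ range (2 * n), (1 + (a * q ^ n)⁻¹ * q ^ k) := by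
  rw [qPoch_neg_mul_self hq0 ha, qPoch_neg_one_div hq0 ha, two_mul, prod_range_add, mul_assoc]

lemma mul_pow_choose_two_mul_inv_pow_add (hq0 : q ≠ 0) (ha : a ≠ 0) (n r : ℕ) :
    a ^ n * q ^ (n + 1).choose 2 * (q ^ (n + r).choose 2 * ((a * q ^ n)⁻¹) ^ (n + r)) =
      (a ^ r)⁻¹ * q ^ r.choose 2 := by
  have hexp : q ^ (n + 1).choose 2 * q ^ (n + r).choose 2 = q ^ r.choose 2 * (q ^ n) ^ (n + r) := by
    rw [← pow_add, ← pow_mul, ← pow_add, choose_two_succ_add_choose_two_add]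
  have hQ : q ^ n ≠ 0 := pow_ne_zero n hq0
  calc _ = a ^ n * (q ^ (n + 1).choose 2 * q ^ (n + r).choose 2) * ((a * q ^ n) ^ (n + r))⁻¹ := by
        rw [inv_pow]; ring
    _ = _ := by rw [hexp, mul_pow, pow_add a]; field_simp

lemma mul_pow_choose_two_mul_inv_pow_sub (hq0 : q ≠ 0) (ha : a ≠ 0) {n r : ℕ} (h : r ≤ n) :
    a ^ n * q ^ (n + 1).choose 2 * (q ^ (n - r).choose 2 * ((a * q ^ n)⁻¹) ^ (n - r)) =
      a ^ r * q ^ (r + 1).choose 2 := by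
  obtain ⟨m, rfl⟩ := Nat.exists_eq_add_of_le' h
  have hexp : q ^ (m + r + 1).choose 2 * q ^ m.choose 2 = q ^ (r + 1).choose 2 * (q ^ (m + r)) ^ m := by
    rw [← pow_add, ← pow_mul, ← pow_add, choose_two_add_succ_add_choose_two]
  have hQ : q ^ (m + r) ≠ 0 := pow_ne_zero _ hq0
  calc _ = a ^ (m + r) * (q ^ (m + r + 1).choose 2 * q ^ m.choose 2) * ((a * q ^ (m + r)) ^ m)⁻¹ := by
        rw [Nat.add_sub_cancel, inv_pow]; ring
    _ = _ := by rw [hexp, mul_pow, pow_add a]; field_simp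

/-- `α_r`, with the paper's `q^(r(r-1)/2)` and `q^(r(r+1)/2)` written as `q^(r choose 2)` and
`q^(r+1 choose 2)`. -/
noncomputable def andrewsAlpha (a q : ℂ) (r : ℕ) : ℂ :=
  if r = 0 then 1 else (a ^ r)⁻¹ * q ^ r.choose 2 + a ^ r * q ^ (r + 1).choose 2

lemma qPoch_mul_qPoch_eq_sum_andrewsAlpha_of_q_eq_zero (a : ℂ) (n : ℕ) :
    qPoch (-(a * 0)) 0 n * qPoch (-1 / a) 0 n =
      ∑ r ∈ range (n + 1), andrewsAlpha a 0 r * qBinomial 0 (2 * n) (n + r) := by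
  have hbinom : ∀ N j, qBinomial 0 N j = 1 := by simp [qBinomial, qPoch_zero_left]
  simp only [mul_zero, neg_zero, qPoch_zero_left, one_mul, hbinom, mul_one]
  rcases n with _ | m
  · simp [qPoch, andrewsAlpha]
  · have hpoch : qPoch (-1 / a) 0 (m + 1) = 1 + a⁻¹ := by
      rw [qPoch, prod_range_succ', prod_eq_one fun k _ => by simp, pow_zero]; ring
    have hvanish : ∀ r, andrewsAlpha a 0 (r + 2) = 0 := fun r => by
      simp [andrewsAlpha, Nat.choose_succ_succ']
    rw [hpoch, sum_range_succ', sum_range_succ', sum_eq_zero fun r _ => hvanish r]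
    simp [andrewsAlpha, add_comm]

theorem qPoch_mul_qPoch_eq_sum_andrewsAlpha (hq : ∀ m, qPoch q q m ≠ 0) (ha : a ≠ 0) (n : ℕ) :
    qPoch (-(a * q)) q n * qPoch (-1 / a) q n =
      ∑ r ∈ range (n + 1), andrewsAlpha a q r * qBinomial q (2 * n) (n + r) := by
  rcases eq_or_ne q 0 with rfl | hq0
  · exact qPoch_mul_qPoch_eq_sum_andrewsAlpha_of_q_eq_zero a n
  rw [qPoch_neg_mul_self_mul_qPoch_neg_one_div hq0 ha, prod_one_add_mul_pow_eq_sum_qBinomial hq,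
    mul_sum, sum_range_two_mul_add_one_eq_sum_pairs]
  refine sum_congr rfl fun r hr => ?_
  have hrn : r ≤ n := Nat.lt_succ_iff.1 (mem_range.1 hr)
  have hcomm : ∀ j, a ^ n * q ^ (n + 1).choose 2 *
      (qBinomial q (2 * n) j * q ^ j.choose 2 * (a * q ^ n)⁻¹ ^ j) =
      qBinomial q (2 * n) j * (a ^ n * q ^ (n + 1).choose 2 * (q ^ j.choose 2 * (a * q ^ n)⁻¹ ^ j)) :=
    fun j => by ring
  simp only [hcomm]
  rcases r with _ | r
  · have hcenter := mul_pow_choose_two_mul_inv_pow_add hq0 ha n 0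
    rw [add_zero] at hcenter
    rw [if_pos rfl, hcenter, add_zero]
    simp [andrewsAlpha]
  · rw [if_neg r.succ_ne_zero, andrewsAlpha, if_neg r.succ_ne_zero,
      mul_pow_choose_two_mul_inv_pow_add hq0 ha, mul_pow_choose_two_mul_inv_pow_sub hq0 ha hrn,
      ← qBinomial_symm q (show n + (r + 1) ≤ 2 * n by omega),
      show 2 * n - (n + (r + 1)) = n - (r + 1) by omega]
    ring

/-- Andrews' Bailey pair relative to `1`. -/
theorem andrews_bailey_pair (q a : ℂ) (hq : ‖q‖ < 1) (ha : a ≠ 0) (n : ℕ) :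
    qPoch (-(a * q)) q n * qPoch (-1 / a) q n / qPoch q q (2 * n) =
    ∑ r ∈ Finset.range (n + 1),
      (if r = 0 then 1 else
        a ^ (-(r : ℤ)) * q ^ (r * (r - 1) / 2) + a ^ r * q ^ (r * (r + 1) / 2)) /
        (qPoch q q (n - r) * qPoch q q (n + r)) := by
  have hqPoch : ∀ m, qPoch q q m ≠ 0 := qPoch_ne_zero hq hq.le
  have hterm : ∀ r ∈ range (n + 1),
      (if r = 0 then 1 else
        a ^ (-(r : ℤ)) * q ^ (r * (r - 1) / 2) + a ^ r * q ^ (r * (r + 1) / 2)) /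
        (qPoch q q (n - r) * qPoch q q (n + r)) =
      andrewsAlpha a q r * qBinomial q (2 * n) (n + r) / qPoch q q (2 * n) := by
    intro r hr
    rw [andrewsAlpha, zpow_neg, zpow_natCast, Nat.choose_two_right, Nat.choose_two_right,
      Nat.add_sub_cancel, mul_comm (r + 1), qBinomial,
      show 2 * n - (n + r) = n - r by have := mem_range.1 hr; omega]
    field_simp [hqPoch]
  rw [sum_congr rfl hterm, ← sum_div, qPoch_mul_qPoch_eq_sum_andrewsAlpha hqPoch ha]
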